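/- Let w : ℤ → {0,1} be any bi-infinite binary word and u : ℤ → {0,1}. Define v : ℤ → {0,1} by v(n) = u(n) if w(n) = w(n+1), and v(n) = 1 − u(n) if w(n) ≠ w(n+1), with the additional hypothesis that w(n)=0, w(n+1)=1 implies u(n)=0 and w(n)=1, w(n+1)=0 implies u(n)=1. Then d(u,v) ≤ 1 in the balance metric. -/

import Mathlib

/-!
At a change position `n` of `w` the compatibility conditions force `u n = w n`, so flipping
`u n` changes the number of `0`'s by exactly `w (n + 1) - w n`; elsewhere nothing changes.
Hence the difference of the `0`-counts of `u` and `v` on `[p, q]` telescopes to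
`w (q + 1) - w p ∈ {-1, 0, 1}`.
-/

/-- The Sturmian word of intercept `ρ` and slope `α`: letter `0` iff `(ρ + nα) mod 1 ∈ [0, 1-α)`. -/
noncomputable def sturm (ρ α : ℝ) (n : ℤ) : Fin 2 :=
  if Int.fract (ρ + n * α) < 1 - α then 0 else 1

/-- Number of occurrences of the letter `0` in `u(p)…u(q)`. -/
noncomputable def zeroCount (u : ℤ → Fin 2) (p q : ℤ) : ℤ :=
  (((Finset.Icc p q).filter (fun i => u i = 0)).card : ℤ)

/-- The balance distance between `u` and `v` is at most one. -/
def distLE1 (u v : ℤ → Fin 2) : Prop :=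
  ∀ p q : ℤ, p ≤ q → |zeroCount u p q - zeroCount v p q| ≤ 1

theorem Finset.sum_Icc_int_sub {M : Type*} [AddCommGroup M] (f : ℤ → M) {p q : ℤ} (hpq : p ≤ q) :
    ∑ i ∈ Finset.Icc p q, (f (i + 1) - f i) = f (q + 1) - f p := by
  induction q, hpq using Int.leInduction with
  | base => simp
  | succ q hpq ih =>
    rw [← Finset.insert_Icc_right_eq_Icc_add_one (by omega), Finset.sum_insert (by simp), ih]
    abel

lemma zeroCount_eq_sum (u : ℤ → Fin 2) (p q : ℤ) :
    zeroCount u p q = ∑ i ∈ Finset.Icc p q, if u i = 0 then (1 : ℤ) else 0 := by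
  rw [zeroCount, Finset.natCast_card_filter]

lemma zeroIndicator_sub_flip (a a' x : Fin 2) (h01 : a = 0 → a' = 1 → x = 0)
    (h10 : a = 1 → a' = 0 → x = 1) :
    ((if x = 0 then 1 else 0) - if (if a = a' then x else 1 - x) = 0 then 1 else 0 : ℤ)
      = (a' : ℤ) - a := by
  revert a a' x
  decide

lemma zeroCount_sub_zeroCount_of_flip {w u v : ℤ → Fin 2}
    (hv : ∀ n, v n = if w n = w (n + 1) then u n else 1 - u n)
    (h01 : ∀ n, w n = 0 → w (n + 1) = 1 → u n = 0)
    (h10 : ∀ n, w n = 1 → w (n + 1) = 0 → u n = 1) {p q : ℤ} (hpq : p ≤ q) :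
    zeroCount u p q - zeroCount v p q = (w (q + 1) : ℤ) - w p := by
  rw [zeroCount_eq_sum, zeroCount_eq_sum, ← Finset.sum_sub_distrib,
    ← Finset.sum_Icc_int_sub (fun n ↦ (w n : ℤ)) hpq]
  refine Finset.sum_congr rfl fun n _ ↦ ?_
  rw [hv n]
  exact zeroIndicator_sub_flip _ _ _ (h01 n) (h10 n)

lemma Fin.abs_val_sub_val_le_one (a b : Fin 2) : |(a : ℤ) - b| ≤ 1 := by
  revert a b
  decide

/-- Flipping `u` exactly at the change positions of a binary word `w`, with the
compatibility conditions on types, produces a word at balance distance at most one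
from `u`. -/
theorem distLE1_of_flip_coding (w u v : ℤ → Fin 2)
    (hv : ∀ n : ℤ, v n = if w n = w (n + 1) then u n else 1 - u n)
    (h01 : ∀ n : ℤ, w n = 0 → w (n + 1) = 1 → u n = 0)
    (h10 : ∀ n : ℤ, w n = 1 → w (n + 1) = 0 → u n = 1) :
    distLE1 u v := fun _ _ hpq ↦
  zeroCount_sub_zeroCount_of_flip hv h01 h10 hpq ▸ Fin.abs_val_sub_val_le_one _ _
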